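/- Let μ1, μ2 ≥ 0 be integers and set ω_n = 2n + 1 + μ1 + μ2 for n ∈ ℕ. Let i, j, k, m ∈ ℕ be such that one of ω_i, ω_j, ω_k, ω_m equals the sum of the other three (for instance ω_m = ω_i + ω_j + ω_k, i.e. m = i + j + k + μ1 + μ2 + 1). Then ∫_{−1}^{1} (1−x)^{2μ1}·(1+x)^{2μ2}·P_i^{(μ1,μ2)}(x)·P_j^{(μ1,μ2)}(x)·P_k^{(μ1,μ2)}(x)·P_m^{(μ1,μ2)}(x) dx = 0; hence the corresponding Fourier coefficient of the conformal cubic wave equation in Hopf coordinates vanishes. -/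
import Mathlib


open MeasureTheory

/-- Jacobi polynomial `P_n^{(α,β)}` with nonnegative integer parameters, as a real-valued
function. -/
noncomputable def jacobiP (α β n : ℕ) (x : ℝ) : ℝ :=
  ∑ s ∈ Finset.range (n + 1),
    (Nat.choose (n + α) (n - s) : ℝ) * (Nat.choose (n + β) s : ℝ) *
      ((x - 1) / 2) ^ s * ((x + 1) / 2) ^ (n - s)

open Polynomial

/-- Jacobi polynomial as a polynomial. -/
noncomputable def jpolyAux (α β n : ℕ) : Polynomial ℝ :=
  ∑ s ∈ Finset.range (n + 1),
    Polynomial.C ((Nat.choose (n + α) (n - s) : ℝ) * (Nat.choose (n + β) s : ℝ)) *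
      ((X - C 1) * C (1/2)) ^ s * ((X + C 1) * C (1/2)) ^ (n - s)

lemma jpolyAux_eval (α β n : ℕ) (x : ℝ) : (jpolyAux α β n).eval x = jacobiP α β n x := by
  simp only [jpolyAux, jacobiP, eval_finset_sum, eval_mul, eval_pow, eval_sub, eval_add,
    eval_X, eval_C]
  refine Finset.sum_congr rfl fun s _ => ?_
  ring

lemma jpolyAux_natDegree (α β n : ℕ) : (jpolyAux α β n).natDegree ≤ n := by
  refine Polynomial.natDegree_sum_le_of_forall_le _ _ fun s hs => ?_
  have hs' : s ≤ n := Nat.lt_succ_iff.mp (Finset.mem_range.mp hs)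
  have h1 : ((X - C (1:ℝ)) * C (1/2)).natDegree ≤ 1 := by
    refine natDegree_mul_le.trans ?_
    simpa using (natDegree_X_sub_C (1:ℝ)).le
  have h2 : ((X + C (1:ℝ)) * C (1/2)).natDegree ≤ 1 := by
    refine natDegree_mul_le.trans ?_
    simpa using (natDegree_X_add_C (1:ℝ)).le
  refine natDegree_mul_le.trans ?_
  have b1 : (((X - C (1:ℝ)) * C (1/2)) ^ s).natDegree ≤ s :=
    natDegree_pow_le.trans (by nlinarith)
  have b2 : (((X + C (1:ℝ)) * C (1/2)) ^ (n - s)).natDegree ≤ n - s :=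
    natDegree_pow_le.trans (by nlinarith)
  have b0 : ((Polynomial.C ((Nat.choose (n + α) (n - s) : ℝ) * (Nat.choose (n + β) s : ℝ))) *
      ((X - C 1) * C (1/2)) ^ s).natDegree ≤ s :=
    natDegree_mul_le.trans (by simp only [natDegree_C]; omega)
  omega

lemma iter_deriv_one_add (N r : ℕ) :
    derivative^[r] ((1 + X : ℝ[X]) ^ N) = C (N.descFactorial r : ℝ) * (1 + X) ^ (N - r) := by
  have h : (1 + X : ℝ[X]) = X - C (-1) := by simp [sub_neg_eq_add, add_comm]
  rw [h, iterate_derivative_X_sub_pow, nsmul_eq_mul]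
  simp [Polynomial.C_eq_natCast]

lemma iter_deriv_one_sub (N r : ℕ) :
    derivative^[r] ((1 - X : ℝ[X]) ^ N) =
      C ((-1 : ℝ) ^ r * N.descFactorial r) * (1 - X) ^ (N - r) := by
  have h : (1 - X : ℝ[X]) = C (-1) * (X - C 1) := by simp [mul_sub]; ring
  rw [h, mul_pow, ← C_pow, iterate_derivative_C_mul, iterate_derivative_X_sub_pow, nsmul_eq_mul]
  apply Polynomial.funext
  intro x
  simp only [eval_mul, eval_pow, eval_C, eval_sub, eval_add, eval_one, eval_X, eval_natCast]
  rcases le_or_gt r N with hr | hr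
  · have hx : (x - 1) ^ (N - r) = (-1:ℝ)^(N-r) * (1 - x)^(N-r) := by
      rw [← neg_sub, neg_pow]
    have hsign : ((-1:ℝ)^N) * ((-1:ℝ)^(N-r)) = (-1:ℝ)^r := by
      rw [← pow_add]
      have : N + (N - r) = 2 * (N - r) + r := by omega
      rw [this, pow_add, pow_mul]
      simp
    rw [hx]
    linear_combination ((N.descFactorial r : ℝ) * (1-x)^(N-r)) * hsign
  · simp [Nat.descFactorial_eq_zero_iff_lt.mpr hr]

lemma natkey (α β s t : ℕ) :
    (s + t).choose s * ((α + (s + t)).descFactorial t * (β + (s + t)).descFactorial s) =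
      (s + t).factorial * (((s + t) + α).choose t * ((s + t) + β).choose s) := by
  rw [Nat.descFactorial_eq_factorial_mul_choose, Nat.descFactorial_eq_factorial_mul_choose]
  have h1 : (s + t).choose s * s.factorial * ((s+t) - s).factorial = (s + t).factorial :=
    Nat.choose_mul_factorial_mul_factorial (Nat.le_add_right s t)
  rw [Nat.add_sub_cancel_left] at h1
  rw [add_comm α (s+t), add_comm β (s+t)] at *
  rw [← h1]; ring

lemma rodrigues (α β m : ℕ) :
    derivative^[m] ((1 - X : ℝ[X]) ^ (α + m) * (1 + X) ^ (β + m)) =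
      C ((-2 : ℝ) ^ m * m.factorial) * ((1 - X) ^ α * (1 + X) ^ β * jpolyAux α β m) := by
  rw [Polynomial.iterate_derivative_mul]
  simp only [iter_deriv_one_sub, iter_deriv_one_add, jpolyAux]
  apply Polynomial.funext
  intro x
  simp only [eval_finset_sum, eval_mul, eval_pow, eval_smul, eval_C, eval_sub, eval_add,
    eval_one, eval_X, smul_eq_mul, Finset.mul_sum]
  refine Finset.sum_congr rfl fun s hs => ?_
  have hs' : s ≤ m := Nat.lt_succ_iff.mp (Finset.mem_range.mp hs)
  obtain ⟨t, rfl⟩ := Nat.exists_eq_add_of_le hs'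
  have e1 : α + (s + t) - (s + t - s) = α + s := by omega
  have e2 : s + t - s = t := by omega
  have e3 : β + (s + t) - s = β + t := by omega
  rw [e1, e2, e3]
  have hcast := congrArg (Nat.cast : ℕ → ℝ) (natkey α β s t)
  push_cast at hcast
  have hx1 : ((x - 1) * (1/2:ℝ)) ^ s = (-1:ℝ)^s * ((1 - x)^s * (1/2)^s) := by
    rw [show (x-1)*(1/2:ℝ) = -1 * ((1-x)*(1/2)) by ring, mul_pow, mul_pow]
  have hx2 : ((x + 1) * (1/2:ℝ)) ^ t = (1 + x)^t * (1/2)^t := by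
    rw [show (x+1)*(1/2:ℝ) = (1+x)*(1/2) by ring, mul_pow]
  have h2 : ((-2:ℝ))^(s+t) = (-1:ℝ)^(s+t) * 2^(s+t) := by
    rw [neg_pow]
  have hss : (-1:ℝ)^s * (-1)^s = 1 := by
    rw [← pow_add, show s + s = 2*s by omega, pow_mul]; norm_num
  have hhalf : (2:ℝ)^(s+t) * ((1/2:ℝ)^s * (1/2)^t) = 1 := by
    rw [pow_add, show ((2:ℝ)^s * 2^t) * ((1/2:ℝ)^s * (1/2)^t)
        = (2*(1/2:ℝ))^s * (2*(1/2:ℝ))^t by rw [mul_pow, mul_pow]; ring]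
    norm_num
  rw [hx1, hx2, h2, nsmul_eq_mul]
  push_cast
  linear_combination
    ((-1:ℝ)^t * (1-x)^(α+s) * (1+x)^(β+t)) * hcast
    - ((-1:ℝ)^t * (1-x)^(α+s) * (1+x)^(β+t) * (((s+t).factorial : ℝ) * ((s+t+α).choose t)
        * ((s+t+β).choose s)) * ((2:ℝ)^(s+t) * (1/2:ℝ)^s * (1/2)^t)) * hss
    - ((-1:ℝ)^t * (1-x)^(α+s) * (1+x)^(β+t) * (((s+t).factorial : ℝ) * ((s+t+α).choose t)
        * ((s+t+β).choose s))) * hhalf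

lemma dvd_iterate_derivative (c : ℝ) (a : ℕ) : ∀ r ≤ a, ∀ u : ℝ[X],
    (X - C c) ^ (a - r) ∣ derivative^[r] ((X - C c) ^ a * u) := by
  induction a with
  | zero =>
    intro r hr u
    interval_cases r
    simp
  | succ b ih =>
    intro r hr u
    rcases Nat.eq_zero_or_pos r with rfl | hpos
    · exact dvd_mul_right _ u
    · obtain ⟨r', rfl⟩ : ∃ r', r = r' + 1 := ⟨r - 1, by omega⟩
      rw [Function.iterate_succ_apply]
      have hd : derivative ((X - C c) ^ (b+1) * u) =
          (X - C c) ^ b * (C ((b:ℝ)+1) * u + (X - C c) * derivative u) := by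
        rw [derivative_mul, derivative_pow, derivative_X_sub_C]
        push_cast
        ring
      rw [hd]
      have := ih r' (by omega) (C ((b:ℝ)+1) * u + (X - C c) * derivative u)
      have he : b + 1 - (r' + 1) = b - r' := by omega
      rw [he]
      exact this

lemma boundary_vanish (α β m r : ℕ) (hr : r < m) :
    (derivative^[r] ((1 - X : ℝ[X]) ^ (α + m) * (1 + X) ^ (β + m))).eval 1 = 0 ∧
    (derivative^[r] ((1 - X : ℝ[X]) ^ (α + m) * (1 + X) ^ (β + m))).eval (-1) = 0 := by
  have h1 : (1 - X : ℝ[X]) ^ (α + m) * (1 + X) ^ (β + m) =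
      (X - C 1) ^ (α + m) * (C ((-1:ℝ)^(α+m)) * (1 + X) ^ (β + m)) := by
    rw [show (1 - X : ℝ[X]) = C (-1) * (X - C 1) by simp [mul_sub]; ring, mul_pow, ← C_pow]
    ring
  have h2 : (1 - X : ℝ[X]) ^ (α + m) * (1 + X) ^ (β + m) =
      (X - C (-1)) ^ (β + m) * ((1 - X) ^ (α + m)) := by
    rw [show (X - C (-1:ℝ)) = 1 + X by simp [sub_neg_eq_add, add_comm]]
    ring
  constructor
  · obtain ⟨v, hv⟩ := dvd_iterate_derivative 1 (α + m) r (by omega) _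
    rw [h1, hv, eval_mul, eval_pow, eval_sub, eval_X, eval_C, sub_self,
      zero_pow (by omega : α + m - r ≠ 0), zero_mul]
  · obtain ⟨v, hv⟩ := dvd_iterate_derivative (-1) (β + m) r (by omega) _
    rw [h2, hv, eval_mul, eval_pow, eval_sub, eval_X, eval_C, sub_neg_eq_add,
      neg_add_cancel, zero_pow (by omega : β + m - r ≠ 0), zero_mul]

lemma ibp_chain (n : ℕ) : ∀ p q : ℝ[X],
    (∀ r < n, (derivative^[r] p).eval 1 = 0 ∧ (derivative^[r] p).eval (-1) = 0) →
    derivative^[n] q = 0 →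
    (∫ x in (-1:ℝ)..1, (derivative^[n] p).eval x * q.eval x) = 0 := by
  induction n with
  | zero =>
    intro p q _ hq
    simp only [Function.iterate_zero_apply] at hq ⊢
    rw [hq]
    simp
  | succ n ih =>
    intro p q hbd hq
    have key : (∫ x in (-1:ℝ)..1,
        ((derivative^[n+1] p).eval x * q.eval x +
          (derivative^[n] p).eval x * (derivative q).eval x)) =
        (derivative^[n] p).eval 1 * q.eval 1 - (derivative^[n] p).eval (-1) * q.eval (-1) := by
      refine intervalIntegral.integral_eq_sub_of_hasDerivAt
        (f := fun y => (derivative^[n] p).eval y * q.eval y) (fun x _ => ?_) ?_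
      · have h1 := (Polynomial.hasDerivAt (derivative^[n] p) x).mul (Polynomial.hasDerivAt q x)
        rw [Function.iterate_succ_apply']
        exact h1
      · exact (((Polynomial.continuous _).mul (Polynomial.continuous _)).add
          ((Polynomial.continuous _).mul (Polynomial.continuous _))).intervalIntegrable _ _
    have hb := hbd n (Nat.lt_succ_self n)
    rw [hb.1, hb.2, zero_mul, zero_mul, sub_zero] at key
    have hi1 : IntervalIntegrable (fun x => (derivative^[n+1] p).eval x * q.eval x)
        volume (-1) 1 :=
      ((Polynomial.continuous _).mul (Polynomial.continuous _)).intervalIntegrable _ _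
    have hi2 : IntervalIntegrable (fun x => (derivative^[n] p).eval x * (derivative q).eval x)
        volume (-1) 1 :=
      ((Polynomial.continuous _).mul (Polynomial.continuous _)).intervalIntegrable _ _
    rw [intervalIntegral.integral_add hi1 hi2] at key
    have h2 : (∫ x in (-1:ℝ)..1, (derivative^[n] p).eval x * (derivative q).eval x) = 0 :=
      ih p (derivative q) (fun r hr => hbd r (by omega))
        (by rw [← Function.iterate_succ_apply]; exact hq)
    linarith

lemma key_ortho (α β i j k m : ℕ) (hm : m = i + j + k + α + β + 1) :
    (∫ x in (-1:ℝ)..1,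
        (1 - x) ^ (2 * α) * (1 + x) ^ (2 * β) *
          jacobiP α β i x * jacobiP α β j x * jacobiP α β k x * jacobiP α β m x) = 0 := by
  set q : ℝ[X] := (1 - X) ^ α * (1 + X) ^ β * jpolyAux α β i * jpolyAux α β j * jpolyAux α β k
    with hqdef
  have hd1 : ((1 - X : ℝ[X]) ^ α).natDegree ≤ α := by
    refine natDegree_pow_le.trans ?_
    have : (1 - X : ℝ[X]).natDegree ≤ 1 := by
      rw [show (1 - X : ℝ[X]) = -(X - C 1) by rw [C_1]; ring, natDegree_neg, natDegree_X_sub_C]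
    nlinarith
  have hd2 : ((1 + X : ℝ[X]) ^ β).natDegree ≤ β := by
    refine natDegree_pow_le.trans ?_
    have : (1 + X : ℝ[X]).natDegree ≤ 1 := by
      rw [show (1 + X : ℝ[X]) = X + C 1 by rw [C_1]; ring, natDegree_X_add_C]
    nlinarith
  have hqdeg : q.natDegree < m := by
    have t1 := natDegree_mul_le (p := (1 - X : ℝ[X]) ^ α) (q := (1 + X : ℝ[X]) ^ β)
    have t2 := natDegree_mul_le (p := (1 - X : ℝ[X]) ^ α * (1 + X) ^ β) (q := jpolyAux α β i)
    have t3 := natDegree_mul_le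
      (p := (1 - X : ℝ[X]) ^ α * (1 + X) ^ β * jpolyAux α β i) (q := jpolyAux α β j)
    have t4 := natDegree_mul_le
      (p := (1 - X : ℝ[X]) ^ α * (1 + X) ^ β * jpolyAux α β i * jpolyAux α β j)
      (q := jpolyAux α β k)
    have ji := jpolyAux_natDegree α β i
    have jj := jpolyAux_natDegree α β j
    have jk := jpolyAux_natDegree α β k
    rw [hqdef]
    omega
  have hq0 : derivative^[m] q = 0 := iterate_derivative_eq_zero hqdeg
  have h0 := ibp_chain m ((1 - X : ℝ[X]) ^ (α + m) * (1 + X) ^ (β + m)) q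
    (fun r hr => boundary_vanish α β m r hr) hq0
  have hc : ((-2 : ℝ) ^ m * m.factorial) ≠ 0 :=
    mul_ne_zero (pow_ne_zero _ (by norm_num)) (Nat.cast_ne_zero.mpr m.factorial_ne_zero)
  have hint : ∀ x : ℝ,
      (1 - x) ^ (2 * α) * (1 + x) ^ (2 * β) *
          jacobiP α β i x * jacobiP α β j x * jacobiP α β k x * jacobiP α β m x =
      ((-2 : ℝ) ^ m * m.factorial)⁻¹ *
        ((derivative^[m] ((1 - X : ℝ[X]) ^ (α + m) * (1 + X) ^ (β + m))).eval x * q.eval x) := by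
    intro x
    rw [rodrigues]
    simp only [hqdef, eval_mul, eval_pow, eval_sub, eval_add, eval_one, eval_X, eval_C,
      jpolyAux_eval]
    field_simp
    ring
  calc (∫ x in (-1:ℝ)..1,
        (1 - x) ^ (2 * α) * (1 + x) ^ (2 * β) *
          jacobiP α β i x * jacobiP α β j x * jacobiP α β k x * jacobiP α β m x)
      = ∫ x in (-1:ℝ)..1, ((-2 : ℝ) ^ m * m.factorial)⁻¹ *
          ((derivative^[m] ((1 - X : ℝ[X]) ^ (α + m) * (1 + X) ^ (β + m))).eval x * q.eval x) :=
        intervalIntegral.integral_congr (fun x _ => hint x)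
    _ = ((-2 : ℝ) ^ m * m.factorial)⁻¹ *
          ∫ x in (-1:ℝ)..1,
            (derivative^[m] ((1 - X : ℝ[X]) ^ (α + m) * (1 + X) ^ (β + m))).eval x * q.eval x :=
        intervalIntegral.integral_const_mul _ _
    _ = 0 := by rw [h0, mul_zero]

/-- Vanishing of the Fourier coefficients of the conformal cubic wave equation in Hopf
coordinates on resonant indices where one frequency `ω_n = 2n + 1 + μ1 + μ2` equals the
sum of the other three. -/
theorem hopf_fourier_coefficient_vanishes (μ1 μ2 i j k m : ℕ)
    (h : 2 * m + 1 + μ1 + μ2 =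
           (2 * i + 1 + μ1 + μ2) + (2 * j + 1 + μ1 + μ2) + (2 * k + 1 + μ1 + μ2) ∨
         2 * k + 1 + μ1 + μ2 =
           (2 * i + 1 + μ1 + μ2) + (2 * j + 1 + μ1 + μ2) + (2 * m + 1 + μ1 + μ2) ∨
         2 * j + 1 + μ1 + μ2 =
           (2 * i + 1 + μ1 + μ2) + (2 * k + 1 + μ1 + μ2) + (2 * m + 1 + μ1 + μ2) ∨
         2 * i + 1 + μ1 + μ2 =
           (2 * j + 1 + μ1 + μ2) + (2 * k + 1 + μ1 + μ2) + (2 * m + 1 + μ1 + μ2)) :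
    (∫ x in (-1:ℝ)..1,
        (1 - x) ^ (2 * μ1) * (1 + x) ^ (2 * μ2) *
          jacobiP μ1 μ2 i x * jacobiP μ1 μ2 j x * jacobiP μ1 μ2 k x * jacobiP μ1 μ2 m x) =
      0 := by
  rcases h with h | h | h | h
  · exact key_ortho μ1 μ2 i j k m (by omega)
  · calc (∫ x in (-1:ℝ)..1,
        (1 - x) ^ (2 * μ1) * (1 + x) ^ (2 * μ2) *
          jacobiP μ1 μ2 i x * jacobiP μ1 μ2 j x * jacobiP μ1 μ2 k x * jacobiP μ1 μ2 m x)
        = ∫ x in (-1:ℝ)..1,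
        (1 - x) ^ (2 * μ1) * (1 + x) ^ (2 * μ2) *
          jacobiP μ1 μ2 i x * jacobiP μ1 μ2 j x * jacobiP μ1 μ2 m x * jacobiP μ1 μ2 k x :=
        intervalIntegral.integral_congr (fun x _ => by ring)
      _ = 0 := key_ortho μ1 μ2 i j m k (by omega)
  · calc (∫ x in (-1:ℝ)..1,
        (1 - x) ^ (2 * μ1) * (1 + x) ^ (2 * μ2) *
          jacobiP μ1 μ2 i x * jacobiP μ1 μ2 j x * jacobiP μ1 μ2 k x * jacobiP μ1 μ2 m x)
        = ∫ x in (-1:ℝ)..1,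
        (1 - x) ^ (2 * μ1) * (1 + x) ^ (2 * μ2) *
          jacobiP μ1 μ2 i x * jacobiP μ1 μ2 k x * jacobiP μ1 μ2 m x * jacobiP μ1 μ2 j x :=
        intervalIntegral.integral_congr (fun x _ => by ring)
      _ = 0 := key_ortho μ1 μ2 i k m j (by omega)
  · calc (∫ x in (-1:ℝ)..1,
        (1 - x) ^ (2 * μ1) * (1 + x) ^ (2 * μ2) *
          jacobiP μ1 μ2 i x * jacobiP μ1 μ2 j x * jacobiP μ1 μ2 k x * jacobiP μ1 μ2 m x)
        = ∫ x in (-1:ℝ)..1,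
        (1 - x) ^ (2 * μ1) * (1 + x) ^ (2 * μ2) *
          jacobiP μ1 μ2 j x * jacobiP μ1 μ2 k x * jacobiP μ1 μ2 m x * jacobiP μ1 μ2 i x :=
        intervalIntegral.integral_congr (fun x _ => by ring)
      _ = 0 := key_ortho μ1 μ2 j k m i (by omega)
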